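/- arXiv:2308.03572 — 3 statements merged into one kernel-verified Lean document; each statement's English description precedes it below -/
import Mathlib

section
/- Let $b_1,\dots,b_K > 0$ and $c_1,\dots,c_K > 0$ and $T > 0$. Then for any nonnegative integers $n_1,\dots,n_K$ with $\sum_{i=1}^K n_i = T$, we have $\sum_{i=1}^K \sum_{t=1}^{n_i} \frac{b_i c_i}{t + b_i} \le \sum_{i=1}^K b_i c_i \log\left(\frac{c_i(T + \sum_{j=1}^K b_j)}{\sum_{j=1}^K b_j c_j}\right)$. -/
/-!
Each inner sum is at most `b i * c i * log ((n i + b i) / b i)`, comparing `1 / (t + 1 + b)` with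
the increment `log (t + 1 + b) - log (t + b)`. The resulting concave function of `x i = n i + b i`,
under the constraint `∑ x i = T + ∑ b j`, is maximal where `x i` is proportional to `b i * c i`,
and the tangent-line inequality `log a ≤ log q + a / q - 1` at that point bounds it.
-/

open Finset Real

lemma inv_add_one_le_log_add_one_sub_log {x : ℝ} (hx : 0 < x) :
    (x + 1)⁻¹ ≤ log (x + 1) - log x := by
  have h := one_sub_inv_le_log_of_pos (by positivity : 0 < (x + 1) / x)
  rwa [inv_div, log_div (by positivity) hx.ne', one_sub_div (by positivity),
    add_sub_cancel_left, one_div] at h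

lemma sum_range_inv_add_le_log (b : ℝ) (hb : 0 < b) (n : ℕ) :
    ∑ t ∈ range n, ((t + 1 : ℝ) + b)⁻¹ ≤ log ((n + b) / b) := by
  calc ∑ t ∈ range n, ((t + 1 : ℝ) + b)⁻¹
      ≤ ∑ t ∈ range n, (log ((t + 1 : ℕ) + b) - log ((t : ℕ) + b)) := by
        gcongr with t
        have := inv_add_one_le_log_add_one_sub_log (by positivity : 0 < (t : ℝ) + b)
        rw [add_right_comm] at this
        push_cast
        exact this
    _ = log ((n + b) / b) := by
        rw [sum_range_sub (fun t : ℕ ↦ log (t + b)), log_div (by positivity) hb.ne']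
        simp

lemma sum_mul_log_div_le {ι : Type*} (s : Finset ι) (w x y : ι → ℝ)
    (hw : ∀ i ∈ s, 0 < w i) (hx : ∀ i ∈ s, 0 < x i) (hy : ∀ i ∈ s, 0 < y i) :
    ∑ i ∈ s, w i * log (x i / y i) ≤
      ∑ i ∈ s, w i * log (w i / y i * (∑ j ∈ s, x j) / ∑ j ∈ s, w j) := by
  rcases s.eq_empty_or_nonempty with rfl | hs
  · simp
  set X := ∑ j ∈ s, x j
  set W := ∑ j ∈ s, w j
  have hX : 0 < X := sum_pos hx hs
  have hW : 0 < W := sum_pos hw hs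
  have tangent : ∀ i ∈ s, w i * log (x i / y i) ≤
      w i * log (w i / y i * X / W) + (x i * (W / X) - w i) := by
    intro i hi
    have hwi := hw i hi; have hxi := hx i hi; have hyi := hy i hi
    have h := log_le_sub_one_of_pos (by positivity : 0 < (x i / y i) / (w i / y i * X / W))
    rw [log_div (by positivity) (by positivity)] at h
    have h' := mul_le_mul_of_nonneg_left h hwi.le
    have e : w i * ((x i / y i) / (w i / y i * X / W) - 1) = x i * (W / X) - w i := by
      field_simp
    linarith
  calc ∑ i ∈ s, w i * log (x i / y i)
      ≤ ∑ i ∈ s, (w i * log (w i / y i * X / W) + (x i * (W / X) - w i)) := sum_le_sum tangent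
    _ = ∑ i ∈ s, w i * log (w i / y i * X / W) := by
        rw [sum_add_distrib, sum_sub_distrib, ← sum_mul, mul_div_cancel₀ _ hX.ne', sub_self,
          add_zero]

theorem stmt_8_general (K : ℕ) (b c : Fin K → ℝ)
    (hb : ∀ i, 0 < b i) (hc : ∀ i, 0 < c i)
    (T : ℕ) (n : Fin K → ℕ) (hn : ∑ i, n i = T) :
    ∑ i, ∑ t ∈ Finset.range (n i), b i * c i / ((t + 1 : ℝ) + b i) ≤
      ∑ i, b i * c i *
        Real.log (c i * ((T : ℝ) + ∑ j, b j) / (∑ j, b j * c j)) := by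
  have hsum : ∑ j, ((n j : ℝ) + b j) = T + ∑ j, b j := by
    rw [sum_add_distrib, ← hn, Nat.cast_sum]
  calc ∑ i, ∑ t ∈ range (n i), b i * c i / ((t + 1 : ℝ) + b i)
      = ∑ i, b i * c i * ∑ t ∈ range (n i), ((t + 1 : ℝ) + b i)⁻¹ := by
        simp_rw [mul_sum, div_eq_mul_inv]
    _ ≤ ∑ i, b i * c i * log ((n i + b i) / b i) := by
        gcongr with i
        · exact (mul_pos (hb i) (hc i)).le
        · exact sum_range_inv_add_le_log (b i) (hb i) (n i)
    _ ≤ ∑ i, b i * c i * log (b i * c i / b i * (∑ j, ((n j : ℝ) + b j)) / ∑ j, b j * c j) :=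
        sum_mul_log_div_le _ _ _ _ (fun i _ ↦ mul_pos (hb i) (hc i))
          (fun i _ ↦ add_pos_of_nonneg_of_pos (Nat.cast_nonneg _) (hb i)) (fun i _ ↦ hb i)
    _ = _ := by
        simp_rw [hsum, mul_div_cancel_left₀ _ (hb _).ne']

theorem stmt_8 (K : ℕ) (b c : Fin K → ℝ)
    (hb : ∀ i, 0 < b i) (hc : ∀ i, 0 < c i)
    (T : ℕ) (hT : 0 < T) (n : Fin K → ℕ) (hn : ∑ i, n i = T) :
    ∑ i, ∑ t ∈ Finset.range (n i), b i * c i / ((t + 1 : ℝ) + b i) ≤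
      ∑ i, b i * c i *
        Real.log (c i * ((T : ℝ) + ∑ j, b j) / (∑ j, b j * c j)) :=
  stmt_8_general K b c hb hc T n hn
end

section
/- Let $c_1,\dots,c_K > 0$, $b_1,\dots,b_K > 0$, and $T > 0$. Suppose $\tau^* > 0$ satisfies $\sum_{i=1}^K (c_i \tau^* - b_i)_+ = T$, where $x_+ = \max\{x, 0\}$. Then for any real $n_1,\dots,n_K \ge 0$ with $\sum_{i=1}^K n_i = T$, we have $\sum_{i=1}^K \sqrt{c_i}(\sqrt{n_i + b_i} - \sqrt{b_i}) \le T/\sqrt{\tau^*}$. -/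
lemma key_pointwise (b c τ n : ℝ) (hb : 0 < b) (hc : 0 < c) (hτ : 0 < τ) (hn : 0 ≤ n) :
    Real.sqrt c * (Real.sqrt (n + b) - Real.sqrt b) ≤
      (n + max (c * τ - b) 0) / (2 * Real.sqrt τ) := by
  have hsτ : 0 < Real.sqrt τ := Real.sqrt_pos.2 hτ
  have hsb : 0 < Real.sqrt b := Real.sqrt_pos.2 hb
  have hsc : 0 < Real.sqrt c := Real.sqrt_pos.2 hc
  have hτ2 : Real.sqrt τ ^ 2 = τ := Real.sq_sqrt hτ.le
  have hb2 : Real.sqrt b ^ 2 = b := Real.sq_sqrt hb.le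
  have hc2 : Real.sqrt c ^ 2 = c := Real.sq_sqrt hc.le
  have hnb2 : Real.sqrt (n + b) ^ 2 = n + b := Real.sq_sqrt (by linarith)
  have hnb : 0 ≤ Real.sqrt (n + b) := Real.sqrt_nonneg _
  have hmono : Real.sqrt b ≤ Real.sqrt (n + b) := Real.sqrt_le_sqrt (by linarith)
  rcases le_or_gt b (c * τ) with h | h
  · rw [max_eq_left (by linarith)]
    rw [le_div_iff₀ (by positivity)]
    have h1 : Real.sqrt b ≤ Real.sqrt c * Real.sqrt τ := by
      rw [← Real.sqrt_mul hc.le]; exact Real.sqrt_le_sqrt h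
    nlinarith [sq_nonneg (Real.sqrt (n + b) - Real.sqrt c * Real.sqrt τ),
      mul_nonneg (sub_nonneg.2 h1) hsb.le]
  · rw [max_eq_right (by linarith)]
    rw [le_div_iff₀ (by positivity)]
    have h1 : Real.sqrt c * Real.sqrt τ ≤ Real.sqrt b := by
      rw [← Real.sqrt_mul hc.le]; exact Real.sqrt_le_sqrt h.le
    nlinarith [mul_nonneg (sub_nonneg.2 hmono) (sub_nonneg.2 h1),
      mul_nonneg (sub_nonneg.2 hmono) hsb.le]

theorem stmt_10 (K : ℕ) (b c : Fin K → ℝ)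
    (hb : ∀ i, 0 < b i) (hc : ∀ i, 0 < c i)
    (T τ : ℝ) (hT : 0 < T) (hτ : 0 < τ)
    (hτeq : ∑ i, max (c i * τ - b i) 0 = T)
    (n : Fin K → ℝ) (hn0 : ∀ i, 0 ≤ n i) (hnsum : ∑ i, n i = T) :
    ∑ i, Real.sqrt (c i) * (Real.sqrt (n i + b i) - Real.sqrt (b i)) ≤
      T / Real.sqrt τ := by
  have hsτ : 0 < Real.sqrt τ := Real.sqrt_pos.2 hτ
  calc ∑ i, Real.sqrt (c i) * (Real.sqrt (n i + b i) - Real.sqrt (b i))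
      ≤ ∑ i, (n i + max (c i * τ - b i) 0) / (2 * Real.sqrt τ) :=
        Finset.sum_le_sum fun i _ => key_pointwise _ _ _ _ (hb i) (hc i) hτ (hn0 i)
    _ = T / Real.sqrt τ := by
        rw [← Finset.sum_div, Finset.sum_add_distrib, hnsum, hτeq]
        field_simp
        ring
end

section
/- Let $\gamma > 0$, $K \ge 2$, and let $p: \{1,\dots,K\} \to [0,1]$ be defined by $p(a) = \frac{1}{K + \gamma(\hat{f}(\hat{a}) - \hat{f}(a))}$ for $a \ne \hat{a}$ and $p(\hat{a}) = 1 - \sum_{a \ne \hat{a}} p(a)$, where $\hat{f}: \{1,\dots,K\} \to \mathbb{R}$ and $\hat{a} \in \arg\max_a \hat{f}(a)$. Then $p$ is a valid probability distribution (each $p(a) \in [0,1]$ and $\sum_a p(a) = 1$), and $\sum_{a=1}^K p(a)(\hat{f}(\hat{a}) - \hat{f}(a)) \le (K-1)/\gamma$. -/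
theorem stmt_19 (K : ℕ) (hK : 2 ≤ K) (γ : ℝ) (hγ : 0 < γ)
    (f : Fin K → ℝ) (ahat : Fin K) (hmax : ∀ a, f a ≤ f ahat)
    (p : Fin K → ℝ)
    (hp : ∀ a, a ≠ ahat → p a = 1 / ((K : ℝ) + γ * (f ahat - f a)))
    (hphat : p ahat = 1 - ∑ a ∈ Finset.univ.erase ahat, p a) :
    (∀ a, 0 ≤ p a ∧ p a ≤ 1) ∧ (∑ a, p a) = 1 ∧
    ∑ a, p a * (f ahat - f a) ≤ ((K : ℝ) - 1) / γ := by
  have hK0 : (0:ℝ) < K := by positivity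
  have hden : ∀ a : Fin K, a ≠ ahat → (K:ℝ) ≤ (K : ℝ) + γ * (f ahat - f a) := by
    intro a _
    nlinarith [hmax a]
  have hpos : ∀ a : Fin K, a ≠ ahat → 0 < p a ∧ p a ≤ 1 / K := by
    intro a ha
    rw [hp a ha]
    constructor
    · apply div_pos one_pos (lt_of_lt_of_le hK0 (hden a ha))
    · apply div_le_div_of_nonneg_left zero_le_one hK0 (hden a ha)
  have hcard : (Finset.univ.erase ahat).card = K - 1 := by
    rw [Finset.card_erase_of_mem (Finset.mem_univ _), Finset.card_univ, Fintype.card_fin]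
  have hsum_le : ∑ a ∈ Finset.univ.erase ahat, p a ≤ ((K:ℝ) - 1) / K := by
    calc ∑ a ∈ Finset.univ.erase ahat, p a ≤ ∑ a ∈ Finset.univ.erase ahat, (1 / (K:ℝ)) :=
          Finset.sum_le_sum (fun a ha => (hpos a (Finset.ne_of_mem_erase ha)).2)
      _ = ((K:ℝ) - 1) / K := by
          rw [Finset.sum_const, hcard]
          rw [nsmul_eq_mul, Nat.cast_sub (by omega : 1 ≤ K)]; push_cast
          ring
  have hsum_nonneg : 0 ≤ ∑ a ∈ Finset.univ.erase ahat, p a :=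
    Finset.sum_nonneg (fun a ha => (hpos a (Finset.ne_of_mem_erase ha)).1.le)
  have hphat_bounds : 0 ≤ p ahat ∧ p ahat ≤ 1 := by
    rw [hphat]
    constructor
    · have : ((K:ℝ) - 1) / K ≤ 1 := by
        rw [div_le_one hK0]; linarith
      linarith [hsum_le]
    · linarith
  refine ⟨?_, ?_, ?_⟩
  · intro a
    by_cases ha : a = ahat
    · rw [ha]; exact hphat_bounds
    · exact ⟨(hpos a ha).1.le, le_trans (hpos a ha).2 (by rw [div_le_one hK0]; exact_mod_cast Nat.one_le_cast.mpr (by omega))⟩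
  · rw [← Finset.add_sum_erase _ _ (Finset.mem_univ ahat), hphat]; ring
  · rw [← Finset.add_sum_erase _ _ (Finset.mem_univ ahat)]
    have h0 : p ahat * (f ahat - f ahat) = 0 := by ring
    rw [h0, zero_add]
    calc ∑ a ∈ Finset.univ.erase ahat, p a * (f ahat - f a)
        ≤ ∑ a ∈ Finset.univ.erase ahat, (1 / γ) := by
          apply Finset.sum_le_sum
          intro a ha
          have hne := Finset.ne_of_mem_erase ha
          rw [hp a hne]
          rw [div_mul_eq_mul_div, one_mul, div_le_div_iff₀ (lt_of_lt_of_le hK0 (hden a hne)) hγ]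
          nlinarith [hmax a]
      _ = ((K:ℝ) - 1) / γ := by
          rw [Finset.sum_const, hcard]
          rw [nsmul_eq_mul, Nat.cast_sub (by omega : 1 ≤ K)]; push_cast
          ring
end
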